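/- arXiv:1807.02517 — 4 statements merged into one kernel-verified Lean document; each statement's English description precedes it below -/
import Mathlib

section
/- Let (M, N, i, π, h) be a contraction of cochain complexes of K-vector spaces, and define the degree −1 graded map h₁ := (d_N ∘ h + h ∘ d_N) ∘ h ∘ (d_N ∘ h + h ∘ d_N). Then (M, N, i, π, h₁) is again a contraction (i.e. i ∘ π − id_N = d_N ∘ h₁ + h₁ ∘ d_N), and it satisfies the side conditions h₁ ∘ i = 0 and π ∘ h₁ = 0. -/
/-!
Since `i ≫ π = 𝟙`, the chain endomorphism `e := π ≫ i - 𝟙` of `N` satisfies `e ≫ e = -e`,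
`i ≫ e = 0` and `e ≫ π = 0`. The homotopy hypothesis says `d h + h d = e`, so `h₁ = e h e`,
and because `e` commutes with `d` we get `d h₁ + h₁ d = e (d h + h d) e = e³ = e`.
The side conditions follow from `i e = 0` and `e π = 0`.
-/

open CategoryTheory

noncomputable def dhPlusHd {K : Type} [Field K]
    (N : CochainComplex (ModuleCat K) ℤ)
    (h : ∀ p q : ℤ, N.X p ⟶ N.X q) (n : ℤ) : N.X n ⟶ N.X n :=
  h n (n - 1) ≫ N.d (n - 1) n + N.d n (n + 1) ≫ h (n + 1) n

noncomputable def hOne {K : Type} [Field K]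
    (N : CochainComplex (ModuleCat K) ℤ)
    (h : ∀ p q : ℤ, N.X p ⟶ N.X q) (p q : ℤ) : N.X p ⟶ N.X q :=
  dhPlusHd N h p ≫ h p q ≫ dhPlusHd N h q

namespace CategoryTheory.Preadditive

variable {C : Type*} [Category C] [Preadditive C] {X Y : C} {i : X ⟶ Y} {π : Y ⟶ X}

lemma sub_id_comp_self_of_comp_eq_id (hiπ : i ≫ π = 𝟙 X) :
    (π ≫ i - 𝟙 Y) ≫ (π ≫ i - 𝟙 Y) = -(π ≫ i - 𝟙 Y) := by
  have hidem : (π ≫ i) ≫ π ≫ i = π ≫ i := by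
    rw [Category.assoc, reassoc_of% hiπ]
  simp only [comp_sub, sub_comp, hidem, Category.comp_id, Category.id_comp]
  abel

lemma comp_sub_id_eq_zero_of_comp_eq_id (hiπ : i ≫ π = 𝟙 X) : i ≫ (π ≫ i - 𝟙 Y) = 0 := by
  rw [comp_sub, reassoc_of% hiπ, Category.comp_id, sub_self]

lemma sub_id_comp_eq_zero_of_comp_eq_id (hiπ : i ≫ π = 𝟙 X) : (π ≫ i - 𝟙 Y) ≫ π = 0 := by
  rw [sub_comp, Category.assoc, hiπ, Category.comp_id, Category.id_comp, sub_self]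

end CategoryTheory.Preadditive

namespace HomologicalComplex.Hom

variable {C : Type*} [Category C] [Preadditive C] {ι : Type*} {c : ComplexShape ι}
  {N : HomologicalComplex C c}

lemma conj_comp_d_add_d_comp_conj (e : N ⟶ N) (h : ∀ p q : ι, N.X p ⟶ N.X q) (n m l : ι) :
    (e.f n ≫ h n m ≫ e.f m) ≫ N.d m n + N.d n l ≫ e.f l ≫ h l n ≫ e.f n =
      e.f n ≫ (h n m ≫ N.d m n + N.d n l ≫ h l n) ≫ e.f n := by
  simp only [Preadditive.comp_add, Preadditive.add_comp, Category.assoc, e.comm,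
    ← e.comm_assoc]

end HomologicalComplex.Hom

open Preadditive in
/-- Let `(M, N, i, π, h)` be a contraction of cochain complexes of `K`-vector
spaces and set `h₁ := (d_N ∘ h + h ∘ d_N) ∘ h ∘ (d_N ∘ h + h ∘ d_N)`.  Then
`h₁` is again of degree `-1`, `(M, N, i, π, h₁)` is again a contraction, and it
satisfies the side conditions `h₁ ∘ i = 0` and `π ∘ h₁ = 0`. -/
theorem stmt4 {K : Type} [Field K]
    (M N : CochainComplex (ModuleCat K) ℤ)
    (i : M ⟶ N) (π : N ⟶ M)
    (h : ∀ p q : ℤ, N.X p ⟶ N.X q)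
    (h_deg : ∀ p q : ℤ, q ≠ p - 1 → h p q = 0)
    (h_retract : i ≫ π = 𝟙 M)
    (h_htpy : ∀ n : ℤ,
      π.f n ≫ i.f n - 𝟙 (N.X n) =
        h n (n - 1) ≫ N.d (n - 1) n + N.d n (n + 1) ≫ h (n + 1) n) :
    (∀ p q : ℤ, q ≠ p - 1 → hOne N h p q = 0) ∧
    (∀ n : ℤ,
      π.f n ≫ i.f n - 𝟙 (N.X n) =
        hOne N h n (n - 1) ≫ N.d (n - 1) n + N.d n (n + 1) ≫ hOne N h (n + 1) n) ∧
    (∀ n : ℤ, i.f n ≫ hOne N h n (n - 1) = 0) ∧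
    (∀ n : ℤ, hOne N h n (n - 1) ≫ π.f (n - 1) = 0) := by
  set e : N ⟶ N := π ≫ i - 𝟙 N
  have he_f (n : ℤ) : e.f n = π.f n ≫ i.f n - 𝟙 (N.X n) := rfl
  have hOne_eq (p q : ℤ) : hOne N h p q = e.f p ≫ h p q ≫ e.f q := by
    rw [hOne, dhPlusHd, dhPlusHd, ← h_htpy, ← h_htpy, he_f, he_f]
  refine ⟨fun p q hpq => by simp [hOne, h_deg p q hpq], fun n => ?_, fun n => ?_, fun n => ?_⟩
  · have he_cube : e ≫ e ≫ e = e := by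
      rw [sub_id_comp_self_of_comp_eq_id h_retract, comp_neg,
        sub_id_comp_self_of_comp_eq_id h_retract, neg_neg]
    rw [hOne_eq, hOne_eq, HomologicalComplex.Hom.conj_comp_d_add_d_comp_conj, ← h_htpy,
      ← he_f, ← HomologicalComplex.comp_f, ← HomologicalComplex.comp_f, he_cube]
  · rw [hOne_eq, ← Category.assoc, ← HomologicalComplex.comp_f,
      comp_sub_id_eq_zero_of_comp_eq_id h_retract]
    simp
  · rw [hOne_eq, Category.assoc, Category.assoc, ← HomologicalComplex.comp_f,
      sub_id_comp_eq_zero_of_comp_eq_id h_retract]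
    simp
end

section
/- Let [n] denote the finite ordered set {0 < 1 < ⋯ < n}. Let f : [n] → [m] be a strictly increasing map and g : [p] → [m] a monotone (non-decreasing) map. Then the set of monotone maps h : [n] → [p] satisfying g ∘ h = f is in bijection with the product P₀ × P₁ × ⋯ × Pₙ, where Pᵢ = {j ∈ [p] : g(j) = f(i)}; explicitly, every tuple (j₀, …, jₙ) with jᵢ ∈ Pᵢ is automatically strictly increasing and determines such an h, and this correspondence is bijective. -/
/-! A lift `h` of `f` through `g` is determined by its values, which lie in the fibres
`g⁻¹(f i)`; conversely any choice of points in these fibres is strictly increasing,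
because `j i' ≤ j i` would give `f i' = g (j i') ≤ g (j i) = f i`. So every tuple of
fibre points is a monotone lift. -/

theorem StrictMono.of_monotone_comp {α β γ : Type*} [Preorder α] [LinearOrder β] [Preorder γ]
    {g : β → γ} {h : α → β} (hg : Monotone g) (hgh : StrictMono (g ∘ h)) : StrictMono h :=
  fun _ _ hab => lt_of_not_ge fun hba => (hgh hab).not_ge (hg hba)

section Fibres

variable {α β γ : Type*} [LinearOrder β] [Preorder γ] {f : α → γ} {g : β → γ}

theorem strictMono_of_forall_mem_fibre [Preorder α] (hf : StrictMono f) (hg : Monotone g)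
    (j : (a : α) → {b : β // g b = f a}) : StrictMono fun a => (j a : β) :=
  StrictMono.of_monotone_comp hg fun a a' hlt => by
    simpa only [Function.comp_apply, (j a).2, (j a').2] using hf hlt

theorem bijective_lift_to_fibres [PartialOrder α] (hf : StrictMono f) (hg : Monotone g) :
    Function.Bijective
      (fun (h : {h : α → β // Monotone h ∧ g ∘ h = f}) (a : α) =>
        (⟨h.1 a, congrFun h.2.2 a⟩ : {b : β // g b = f a})) := by
  refine ⟨fun h₁ h₂ heq => ?_, fun j => ?_⟩
  · exact Subtype.ext (funext fun a => congrArg Subtype.val (congrFun heq a))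
  · exact ⟨⟨fun a => j a, (strictMono_of_forall_mem_fibre hf hg j).monotone,
      funext fun a => (j a).2⟩, rfl⟩

end Fibres

/-- Let `f : [n] → [m]` be strictly increasing and `g : [p] → [m]` monotone
(non-decreasing).  Then every tuple `(j₀, …, jₙ)` with `jᵢ ∈ Pᵢ = g⁻¹(f i)` is
automatically strictly increasing, and the evaluation map from
`{monotone h : [n] → [p] with g ∘ h = f}` to `P₀ × ⋯ × Pₙ` is a bijection. -/
theorem stmt7 (n m p : ℕ)
    (f : Fin (n + 1) → Fin (m + 1)) (hf : StrictMono f)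
    (g : Fin (p + 1) → Fin (m + 1)) (hg : Monotone g) :
    (∀ j : (i : Fin (n + 1)) → {x : Fin (p + 1) // g x = f i},
      StrictMono fun i => ((j i : Fin (p + 1)))) ∧
    Function.Bijective
      (fun (h : {h : Fin (n + 1) → Fin (p + 1) // Monotone h ∧ g ∘ h = f})
          (i : Fin (n + 1)) =>
        (⟨h.1 i, congrFun h.2.2 i⟩ : {x : Fin (p + 1) // g x = f i})) :=
  ⟨strictMono_of_forall_mem_fibre hf hg, bijective_lift_to_fibres hf hg⟩
end

section
/- Let f : [n] → [m] be a monotone map. If f is not injective, then the Whitney elementary form ω_f is zero in Ω_m. If f is injective, then the pullback of ω_f along f itself satisfies f*ω_f = n! · dx₁ ∧ dx₂ ∧ ⋯ ∧ dxₙ in Ω_n. -/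
noncomputable section

/-- The DG-algebra of polynomial differential forms on the standard
`m`-simplex, modelled as the exterior algebra over
`R = MvPolynomial (Fin m) K` of the free module `R^m`. -/
abbrev Omega (K : Type) [Field K] (m : ℕ) :=
  ExteriorAlgebra (MvPolynomial (Fin m) K) (Fin m → MvPolynomial (Fin m) K)

/-- The coordinates `x₀, x₁, …, x_m`, where `x₁, …, x_m` are the polynomial
variables and `x₀ := 1 - (x₁ + ⋯ + x_m)`. -/
def xC (K : Type) [Field K] (m : ℕ) : Fin (m + 1) → MvPolynomial (Fin m) K :=
  Fin.cases (1 - ∑ i : Fin m, MvPolynomial.X i) (fun i => MvPolynomial.X i)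

/-- The vectors of `R^m` representing `dx₀, dx₁, …, dx_m`: the standard basis
vectors for `dx₁, …, dx_m`, and `-(dx₁ + ⋯ + dx_m)` for `dx₀`. -/
def vDX (K : Type) [Field K] (m : ℕ) :
    Fin (m + 1) → (Fin m → MvPolynomial (Fin m) K) :=
  Fin.cases (-∑ i : Fin m, Pi.single i 1) (fun i => Pi.single i 1)

/-- The one-forms `dx₀, dx₁, …, dx_m` in `Ω_m` (degree `1` elements of the
exterior algebra). -/
def dX (K : Type) [Field K] (m : ℕ) (j : Fin (m + 1)) : Omega K m :=
  ExteriorAlgebra.ι (MvPolynomial (Fin m) K) (vDX K m j)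

/-- The Whitney elementary form
`ω_f = n! Σᵢ (-1)ⁱ x_{f i} dx_{f 0} ∧ ⋯ ∧ (omit dx_{f i}) ∧ ⋯ ∧ dx_{f n}`
associated to a map `f : [n] → [m]`. -/
def omegaF (K : Type) [Field K] {n m : ℕ} (f : Fin (n + 1) → Fin (m + 1)) :
    Omega K m :=
  (n.factorial : MvPolynomial (Fin m) K) •
    ∑ i : Fin (n + 1),
      (-1 : MvPolynomial (Fin m) K) ^ (i : ℕ) •
        (algebraMap (MvPolynomial (Fin m) K) (Omega K m) (xC K m (f i)) *
          ((List.ofFn fun j : Fin (n + 1) => dX K m (f j)).eraseIdx (i : ℕ)).prod)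

/-- On polynomials, the pullback along `g : [n] → [m]` substitutes
`x_j ↦ Σ_{i ∈ [n], g i = j} x_i`. -/
def pullbackPoly (K : Type) [Field K] {n m : ℕ}
    (g : Fin (n + 1) → Fin (m + 1)) :
    MvPolynomial (Fin m) K →ₐ[K] MvPolynomial (Fin n) K :=
  MvPolynomial.aeval fun i : Fin m =>
    ∑ j ∈ Finset.univ.filter (fun j : Fin (n + 1) => g j = i.succ), xC K n j

/-- On one-forms, the pullback along `g : [n] → [m]` sends
`dx_j ↦ Σ_{i ∈ [n], g i = j} dx_i`; this is the corresponding vector. -/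
def pullbackVec (K : Type) [Field K] {n m : ℕ}
    (g : Fin (n + 1) → Fin (m + 1)) (i : Fin m) :
    Fin n → MvPolynomial (Fin n) K :=
  ∑ j ∈ Finset.univ.filter (fun j : Fin (n + 1) => g j = i.succ), vDX K n j

/-- The pullback `g* : Ω_m → Ω_n` along a map `g : [n] → [m]`: the (unique)
`K`-algebra homomorphism determined by `x_j ↦ Σ_{i ∈ [n], g i = j} x_i` and
`dx_j ↦ Σ_{i ∈ [n], g i = j} dx_i` for every `j ∈ [m]`. -/
def pullback (K : Type) [Field K] {n m : ℕ}
    (g : Fin (n + 1) → Fin (m + 1)) : Omega K m → Omega K n :=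
  letI φ : MvPolynomial (Fin m) K →+* Omega K n :=
    (algebraMap (MvPolynomial (Fin n) K) (Omega K n)).comp
      (pullbackPoly K g).toRingHom
  letI hcomm : ∀ (c : MvPolynomial (Fin m) K) (x : Omega K n),
      φ c * x = x * φ c := fun c x => Algebra.commutes (pullbackPoly K g c) x
  letI : Algebra (MvPolynomial (Fin m) K) (Omega K n) := φ.toAlgebra' hcomm
  letI L : (Fin m → MvPolynomial (Fin m) K) →ₗ[MvPolynomial (Fin m) K]
      Omega K n :=
    { toFun := fun v =>
        ExteriorAlgebra.ι (MvPolynomial (Fin n) K)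
          (∑ i : Fin m, pullbackPoly K g (v i) • pullbackVec K g i)
      map_add' := by
        intro u v
        show ExteriorAlgebra.ι (MvPolynomial (Fin n) K)
            (∑ i : Fin m, pullbackPoly K g ((u + v) i) • pullbackVec K g i) =
          ExteriorAlgebra.ι (MvPolynomial (Fin n) K)
              (∑ i : Fin m, pullbackPoly K g (u i) • pullbackVec K g i) +
            ExteriorAlgebra.ι (MvPolynomial (Fin n) K)
              (∑ i : Fin m, pullbackPoly K g (v i) • pullbackVec K g i)
        rw [← map_add, ← Finset.sum_add_distrib]
        exact congrArg _ (Finset.sum_congr rfl fun i _ => by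
          simp [Pi.add_apply, map_add, add_smul])
      map_smul' := by
        intro c v
        show ExteriorAlgebra.ι (MvPolynomial (Fin n) K)
            (∑ i : Fin m, pullbackPoly K g ((c • v) i) • pullbackVec K g i) =
          algebraMap (MvPolynomial (Fin n) K) (Omega K n)
              (pullbackPoly K g c) *
            ExteriorAlgebra.ι (MvPolynomial (Fin n) K)
              (∑ i : Fin m, pullbackPoly K g (v i) • pullbackVec K g i)
        rw [← Algebra.smul_def, ← map_smul, Finset.smul_sum]
        exact congrArg _ (Finset.sum_congr rfl fun i _ => by
          simp [Pi.smul_apply, smul_eq_mul, map_mul, smul_smul]) }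
  (ExteriorAlgebra.lift (MvPolynomial (Fin m) K)
    ⟨L, fun v => ExteriorAlgebra.ι_sq_zero _⟩ :
      Omega K m →ₐ[MvPolynomial (Fin m) K] Omega K n)

/-!
Up to the factor `n!`, `ω_f` is the value of one alternating `(n + 1)`-form on the vectors
`(x_{f i}, dx_{f i}) ∈ R × R^m`, namely the alternating uncurrying of `(x, v) ↦ x • (v ∧ ⋯)`.
So `ω_f` vanishes as soon as `f` repeats a value.

For injective `f`, the pullback `f*` sends `x_{f i}` and `dx_{f i}` to `x_i` and `dx_i`, so
`f*ω_f = ω_id`. Since `Σ (x_i, dx_i) = (1, 0)`, we may replace the first argument of the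
alternating form by `(1, 0)`; then every term but the first contains the vector `0`, and the
first term is `dx₁ ∧ ⋯ ∧ dxₙ`.
-/

open Function

theorem List.eraseIdx_ofFn {α : Type*} {n : ℕ} (g : Fin (n + 1) → α) (i : Fin (n + 1)) :
    (List.ofFn g).eraseIdx i = List.ofFn (Fin.removeNth i g) := by
  refine List.ext_getElem (by simp [List.length_eraseIdx_of_lt, i.isLt]) fun j _ h => ?_
  simp only [List.length_ofFn] at h
  simp only [List.getElem_eraseIdx, List.getElem_ofFn, Fin.removeNth_apply]
  split_ifs with hj
  · rw [Fin.succAbove_of_castSucc_lt _ _ hj]; rfl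
  · rw [Fin.succAbove_of_le_castSucc _ _ (not_lt.1 hj)]; rfl

theorem Finset.filter_apply_eq_apply_of_injective {α β : Type*} [Fintype α] [DecidableEq α]
    [DecidableEq β] {g : α → β} (hg : Injective g) (a : α) :
    ({b | g b = g a} : Finset α) = {a} := by
  ext b
  simp [hg.eq_iff]

theorem Finset.sum_filter_eq_zero_eq_sub {ι β : Type*} [Fintype ι] [AddCommGroup β] {m : ℕ}
    (g : ι → Fin (m + 1)) (φ : ι → β) :
    ∑ b with g b = 0, φ b = ∑ b, φ b - ∑ i : Fin m, ∑ b with g b = i.succ, φ b := by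
  rw [← Finset.sum_fiberwise Finset.univ g φ, Fin.sum_univ_succ, add_sub_cancel_right]

namespace AlternatingMap

variable {R M N : Type*} [CommRing R] [AddCommGroup M] [Module R M] [AddCommGroup N] [Module R N]

theorem map_update_sum_self {ι : Type*} [Fintype ι] [DecidableEq ι] (f : M [⋀^ι]→ₗ[R] N)
    (v : ι → M) (i : ι) : f (update v i (∑ j, v j)) = f v := by
  rw [map_update_sum, Finset.sum_eq_single i (fun j _ hji => f.map_update_self v hji.symm)
    (by simp), update_eq_self]

variable {k : ℕ}

/-- For `f = ιMulti` and `w i = (x_{g i}, dx_{g i})` this is `ω_g / k!`. -/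
def whitney (f : M [⋀^Fin k]→ₗ[R] N) : (R × M) [⋀^Fin (k + 1)]→ₗ[R] N :=
  alternatizeUncurryFin ((LinearMap.fst R R M).smulRight (f.compLinearMap (LinearMap.snd R R M)))

theorem whitney_apply (f : M [⋀^Fin k]→ₗ[R] N) (w : Fin (k + 1) → R × M) :
    f.whitney w = ∑ i : Fin (k + 1),
      (-1 : R) ^ (i : ℕ) • (w i).1 • f (Fin.removeNth i fun j => (w j).2) := by
  simp only [whitney, alternatizeUncurryFin_apply, ← Int.cast_smul_eq_zsmul R, Int.cast_pow,
    Int.cast_neg, Int.cast_one, LinearMap.coe_smulRight, LinearMap.fst_apply, smul_apply,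
    compLinearMap_apply, LinearMap.snd_apply]
  rfl

theorem whitney_eq_of_sum_eq (f : M [⋀^Fin k]→ₗ[R] N) {w : Fin (k + 1) → R × M}
    (hw : ∑ i, w i = (1, 0)) : f.whitney w = f fun j => (w j.succ).2 := by
  rw [← map_update_sum_self _ w 0, hw, whitney_apply, Fin.sum_univ_succ]
  simp only [Fin.val_zero, pow_zero, one_smul, update_self, Fin.removeNth_zero, Fin.val_succ]
  rw [Finset.sum_eq_zero fun i _ => ?_, add_zero]
  · rfl
  · obtain ⟨j, hj⟩ := Fin.exists_succAbove_eq (Fin.succ_ne_zero i).symm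
    rw [f.map_coord_zero j (by simp [Fin.removeNth_apply, hj]), smul_zero, smul_zero]

end AlternatingMap

section Simplex

variable (K : Type) [Field K] {n m : ℕ}

theorem sum_xC : ∑ j, xC K n j = 1 := by
  simp [xC, Fin.sum_univ_succ]

theorem sum_vDX : ∑ j, vDX K n j = 0 := by
  simp [vDX, Fin.sum_univ_succ]

variable (g : Fin (n + 1) → Fin (m + 1))

def pullbackRingHom : Omega K m →+* Omega K n where
  toFun := pullback K g
  map_one' := by unfold pullback; exact map_one _
  map_mul' := by unfold pullback; exact map_mul _
  map_zero' := by unfold pullback; exact map_zero _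
  map_add' := by unfold pullback; exact map_add _

theorem coe_pullbackRingHom : ⇑(pullbackRingHom K g) = pullback K g := rfl

/-- The algebra structure over which `pullback` is built as a lift; it has to agree with the
one written inside `pullback`. -/
abbrev pullbackAlgebra : Algebra (MvPolynomial (Fin m) K) (Omega K n) :=
  ((algebraMap _ _).comp (pullbackPoly K g).toRingHom).toAlgebra' fun c x =>
    Algebra.commutes (pullbackPoly K g c) x

theorem pullback_algebraMap (p : MvPolynomial (Fin m) K) :
    pullback K g (algebraMap _ _ p) = algebraMap _ _ (pullbackPoly K g p) := by
  let := pullbackAlgebra K g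
  exact AlgHom.commutes _ p

theorem pullback_ι (v : Fin m → MvPolynomial (Fin m) K) :
    pullback K g (ExteriorAlgebra.ι _ v) =
      ExteriorAlgebra.ι _ (∑ i, pullbackPoly K g (v i) • pullbackVec K g i) := by
  let := pullbackAlgebra K g
  exact ExteriorAlgebra.lift_ι_apply (R := MvPolynomial (Fin m) K) (A := Omega K n) _
    (fun _ => ExteriorAlgebra.ι_sq_zero _) v

theorem pullback_smul (c : MvPolynomial (Fin m) K) (x : Omega K m) :
    pullback K g (c • x) = pullbackPoly K g c • pullback K g x := by
  rw [Algebra.smul_def, ← coe_pullbackRingHom, map_mul, coe_pullbackRingHom,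
    pullback_algebraMap, ← Algebra.smul_def]

theorem pullbackPoly_xC (j : Fin (m + 1)) :
    pullbackPoly K g (xC K m j) = ∑ b with g b = j, xC K n b := by
  cases j using Fin.cases with
  | zero =>
    rw [Finset.sum_filter_eq_zero_eq_sub, sum_xC]
    simp [pullbackPoly, xC]
  | succ c => simp [pullbackPoly, xC]

theorem pullback_dX (j : Fin (m + 1)) :
    pullback K g (dX K m j) = ∑ b with g b = j, dX K n b := by
  simp only [dX, pullback_ι, ← map_sum]
  congr 1
  cases j using Fin.cases with
  | zero =>
    rw [Finset.sum_filter_eq_zero_eq_sub, sum_vDX]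
    simp [vDX, pullbackVec, Pi.single_apply]
  | succ c => simp [vDX, pullbackVec, Pi.single_apply]

variable {K g}

theorem pullbackPoly_xC_apply_of_injective (hg : Injective g) (a : Fin (n + 1)) :
    pullbackPoly K g (xC K m (g a)) = xC K n a := by
  rw [pullbackPoly_xC, Finset.filter_apply_eq_apply_of_injective hg, Finset.sum_singleton]

theorem pullback_dX_apply_of_injective (hg : Injective g) (a : Fin (n + 1)) :
    pullback K g (dX K m (g a)) = dX K n a := by
  rw [pullback_dX, Finset.filter_apply_eq_apply_of_injective hg, Finset.sum_singleton]

theorem pullback_omegaF_comp {k : ℕ} (hg : Injective g) (h : Fin (k + 1) → Fin (n + 1)) :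
    pullback K g (omegaF K (g ∘ h)) = omegaF K h := by
  rw [omegaF, omegaF, pullback_smul, map_natCast, ← coe_pullbackRingHom, map_sum]
  refine congrArg _ (Finset.sum_congr rfl fun i _ => ?_)
  rw [coe_pullbackRingHom, pullback_smul, ← coe_pullbackRingHom, map_mul, map_list_prod,
    ← List.eraseIdx_map, List.map_ofFn]
  simp only [coe_pullbackRingHom, pullback_algebraMap, map_pow, map_neg, map_one, comp_apply,
    pullbackPoly_xC_apply_of_injective hg, pullback_dX_apply_of_injective hg, comp_def]

variable (K)

theorem omegaF_eq_whitney (f : Fin (n + 1) → Fin (m + 1)) :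
    omegaF K f = (n.factorial : MvPolynomial (Fin m) K) •
      (ExteriorAlgebra.ιMulti _ n).whitney fun i => (xC K m (f i), vDX K m (f i)) := by
  rw [omegaF, AlternatingMap.whitney_apply]
  refine congrArg _ (Finset.sum_congr rfl fun i _ => ?_)
  rw [List.eraseIdx_ofFn, ExteriorAlgebra.ιMulti_apply, ← Algebra.smul_def]
  rfl

theorem omegaF_eq_zero_of_not_injective (f : Fin (n + 1) → Fin (m + 1)) (hf : ¬Injective f) :
    omegaF K f = 0 := by
  rw [omegaF_eq_whitney, AlternatingMap.map_eq_zero_of_not_injective, smul_zero]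
  exact fun h => hf (h.of_comp (f := fun j => (xC K m j, vDX K m j)))

variable (n) in
theorem omegaF_id : omegaF K (id : Fin (n + 1) → Fin (n + 1)) =
    (n.factorial : MvPolynomial (Fin n) K) • (List.ofFn fun i : Fin n => dX K n i.succ).prod := by
  have hsum : ∑ i, (xC K n i, vDX K n i) = (1, 0) :=
    Prod.ext (by simp [Prod.fst_sum, sum_xC]) (by simp [Prod.snd_sum, sum_vDX])
  simp only [omegaF_eq_whitney, id_eq]
  rw [AlternatingMap.whitney_eq_of_sum_eq _ hsum, ExteriorAlgebra.ιMulti_apply]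
  rfl

end Simplex

set_option synthInstance.maxHeartbeats 1000000 in
theorem stmt9_general (K : Type) [Field K] (n m : ℕ)
    (f : Fin (n + 1) → Fin (m + 1)) :
    (¬ Function.Injective f → omegaF K f = 0) ∧
    (Function.Injective f →
      pullback K f (omegaF K f) =
        (n.factorial : MvPolynomial (Fin n) K) •
          (List.ofFn fun i : Fin n => dX K n i.succ).prod) :=
  ⟨omegaF_eq_zero_of_not_injective K f, fun hf => by
    rw [← omegaF_id, ← pullback_omegaF_comp hf id, comp_id]⟩

set_option synthInstance.maxHeartbeats 1000000 in
/-- Let `f : [n] → [m]` be monotone. If `f` is not injective then the Whitney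
elementary form `ω_f` vanishes in `Ω_m`; if `f` is injective then the pullback
of `ω_f` along `f` itself is `n! ⬝ dx₁ ∧ dx₂ ∧ ⋯ ∧ dxₙ` in `Ω_n`. -/
theorem stmt9 (K : Type) [Field K] [CharZero K] (n m : ℕ)
    (f : Fin (n + 1) → Fin (m + 1)) (hf : Monotone f) :
    (¬ Function.Injective f → omegaF K f = 0) ∧
    (Function.Injective f →
      pullback K f (omegaF K f) =
        (n.factorial : MvPolynomial (Fin n) K) •
          (List.ofFn fun i : Fin n => dX K n i.succ).prod) :=
  stmt9_general K n m f
end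
end

section
/- For every tuple of indices (i₀, …, iₙ) ∈ {0, …, m}^{n+1}, the following identity holds in Ω_m: Σ_{i=0}^{m} ω_{i, i₀, …, iₙ} = (n+1)! · dx_{i₀} ∧ dx_{i₁} ∧ ⋯ ∧ dx_{iₙ}, where for any tuple (j₀, …, j_q) one sets ω_{j₀, …, j_q} := q! Σ_{k=0}^{q} (−1)^k x_{j_k} dx_{j₀} ∧ ⋯ ∧ (omit dx_{j_k}) ∧ ⋯ ∧ dx_{j_q}. -/
/-! Splitting off the first index gives the recursion
`ω_{i,v} = (n+1)! x_i dx_v - (n+1) dx_i ∧ ω_v`, where `dx_v = dx_{v₀} ∧ ⋯ ∧ dx_{vₙ}`.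
Summing over `i`, the first term contributes `(n+1)! dx_v` because `Σᵢ xᵢ = 1`, and the second
vanishes because `Σᵢ dxᵢ = 0`. -/

noncomputable section

open Finset

lemma sum_xC_s11 (K : Type) [Field K] (m : ℕ) : ∑ i : Fin (m + 1), xC K m i = 1 := by
  simp [Fin.sum_univ_succ, xC]

lemma sum_dX (K : Type) [Field K] (m : ℕ) : ∑ i : Fin (m + 1), dX K m i = 0 := by
  simp [dX, ← map_sum, Fin.sum_univ_succ, vDX]

lemma omegaF_cons (K : Type) [Field K] {n m : ℕ} (i : Fin (m + 1))
    (v : Fin (n + 1) → Fin (m + 1)) :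
    omegaF K (Fin.cons i v : Fin (n + 2) → Fin (m + 1)) =
      ((n + 1).factorial : MvPolynomial (Fin m) K) •
          (algebraMap _ (Omega K m) (xC K m i) *
            (List.ofFn fun j : Fin (n + 1) => dX K m (v j)).prod) -
        ((n + 1 : ℕ) : MvPolynomial (Fin m) K) • (dX K m i * omegaF K v) := by
  have hofFn : (List.ofFn fun j => dX K m ((Fin.cons i v : Fin (n + 2) → Fin (m + 1)) j)) =
      dX K m i :: List.ofFn fun j => dX K m (v j) := List.ofFn_succ
  rw [omegaF, omegaF, hofFn, Fin.sum_univ_succ, Nat.factorial_succ, Nat.cast_mul, mul_smul,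
    mul_smul, mul_smul_comm, ← smul_sub, ← smul_sub, mul_sum, sub_eq_add_neg, ← sum_neg_distrib]
  congr 3
  · simp
  · refine sum_congr rfl fun j _ => ?_
    simp only [Fin.val_succ, List.eraseIdx_cons_succ, List.prod_cons, Fin.cons_succ, pow_succ,
      mul_neg_one, neg_smul, mul_smul_comm, Algebra.left_comm]

theorem stmt11_general (K : Type) [Field K] (n m : ℕ)
    (v : Fin (n + 1) → Fin (m + 1)) :
    ∑ i : Fin (m + 1), omegaF K (Fin.cons i v : Fin (n + 2) → Fin (m + 1)) =
      ((n + 1).factorial : MvPolynomial (Fin m) K) •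
        (List.ofFn fun j : Fin (n + 1) => dX K m (v j)).prod := by
  simp only [omegaF_cons, sum_sub_distrib, ← smul_sum, ← sum_mul, ← map_sum, sum_xC_s11, sum_dX,
    map_one, one_mul, zero_mul, smul_zero, sub_zero]

set_option synthInstance.maxHeartbeats 1000000 in
/-- For every tuple of indices `(i₀, …, iₙ)` in `{0, …, m}`, one has
`Σ_{i=0}^{m} ω_{i, i₀, …, iₙ} = (n+1)! ⬝ dx_{i₀} ∧ ⋯ ∧ dx_{iₙ}` in `Ω_m`,
where `ω_{j₀,…,j_q} = q! Σ_k (-1)^k x_{j_k} dx_{j₀} ∧ ⋯ (omit dx_{j_k}) ⋯ ∧ dx_{j_q}`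
(i.e. `ω_v = omegaF v` for an arbitrary tuple `v`). -/
theorem stmt11 (K : Type) [Field K] [CharZero K] (n m : ℕ)
    (v : Fin (n + 1) → Fin (m + 1)) :
    ∑ i : Fin (m + 1), omegaF K (Fin.cons i v : Fin (n + 2) → Fin (m + 1)) =
      ((n + 1).factorial : MvPolynomial (Fin m) K) •
        (List.ofFn fun j : Fin (n + 1) => dX K m (v j)).prod :=
  stmt11_general K n m v

end
end
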